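/- Open/closed portmanteau implies continuity sets: if for every open $U$, $\liminf_n V(X_n \in U) \ge V(X \in U)$ and $\liminf_n v(X_n \in U) \ge v(X \in U)$, then for every Borel set $A \subseteq \mathbb{R}$ with $V(X \in \partial A) = 0$, one has $V(X_n \in A) \to V(X \in A)$ and $v(X_n \in A) \to v(X \in A)$. -/

import Mathlib

open MeasureTheory Filter Set Topology ENNReal

/-- The upper capacity associated to a family of probability measures. -/
noncomputable def upperCap {Ω : Type*} [MeasurableSpace Ω]
    (Ps : Set (Measure Ω)) (A : Set Ω) : ℝ≥0∞ :=
  ⨆ P ∈ Ps, P A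

/-- The lower capacity associated to a family of probability measures. -/
noncomputable def lowerCap {Ω : Type*} [MeasurableSpace Ω]
    (Ps : Set (Measure Ω)) (A : Set Ω) : ℝ≥0∞ :=
  ⨅ P ∈ Ps, P A

/-!
The two capacities are conjugate, `V(Bᶜ) = 1 - v(B)` and `v(Bᶜ) = 1 - V(B)`, so the open-set
lower bounds for one capacity become closed-set upper bounds for the other. If `X` charges
`∂A` for no `P`, then `X ∈ interior A`, `X ∈ A` and `X ∈ closure A` have the same capacities;
squeezing `Xn ∈ A` between `Xn ∈ interior A` and `Xn ∈ closure A` gives convergence.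
-/

section Capacity

variable {Ω : Type*} [MeasurableSpace Ω] {Ps : Set (Measure Ω)}

lemma upperCap_mono {B C : Set Ω} (h : B ⊆ C) : upperCap Ps B ≤ upperCap Ps C :=
  iSup₂_mono fun _ _ => measure_mono h

lemma lowerCap_mono {B C : Set Ω} (h : B ⊆ C) : lowerCap Ps B ≤ lowerCap Ps C :=
  iInf₂_mono fun _ _ => measure_mono h

lemma measure_eq_zero_of_upperCap_eq_zero {P : Measure Ω} (hP : P ∈ Ps) {N : Set Ω}
    (h : upperCap Ps N = 0) : P N = 0 :=
  nonpos_iff_eq_zero.mp (h ▸ le_iSup₂ (f := fun P (_ : P ∈ Ps) => P N) P hP)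

lemma upperCap_eq_of_between_null_sdiff {s₁ s₂ s₃ : Set Ω} (h12 : s₁ ⊆ s₂) (h23 : s₂ ⊆ s₃)
    (h : upperCap Ps (s₃ \ s₁) = 0) :
    upperCap Ps s₁ = upperCap Ps s₂ ∧ upperCap Ps s₂ = upperCap Ps s₃ :=
  have heq := fun P (hP : P ∈ Ps) => measure_eq_measure_of_between_null_sdiff h12 h23
    (measure_eq_zero_of_upperCap_eq_zero hP h)
  ⟨biSup_congr fun P hP => (heq P hP).1, biSup_congr fun P hP => (heq P hP).2⟩

lemma lowerCap_eq_of_between_null_sdiff {s₁ s₂ s₃ : Set Ω} (h12 : s₁ ⊆ s₂) (h23 : s₂ ⊆ s₃)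
    (h : upperCap Ps (s₃ \ s₁) = 0) :
    lowerCap Ps s₁ = lowerCap Ps s₂ ∧ lowerCap Ps s₂ = lowerCap Ps s₃ :=
  have heq := fun P (hP : P ∈ Ps) => measure_eq_measure_of_between_null_sdiff h12 h23
    (measure_eq_zero_of_upperCap_eq_zero hP h)
  ⟨biInf_congr fun P hP => (heq P hP).1, biInf_congr fun P hP => (heq P hP).2⟩

variable (hprob : ∀ P ∈ Ps, IsProbabilityMeasure P)
include hprob

lemma measure_compl_eq_one_sub {P : Measure Ω} (hP : P ∈ Ps) {B : Set Ω} (hB : MeasurableSet B) :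
    P Bᶜ = 1 - P B :=
  have := hprob P hP
  prob_compl_eq_one_sub hB

lemma upperCap_compl {B : Set Ω} (hB : MeasurableSet B) :
    upperCap Ps Bᶜ = 1 - lowerCap Ps B := by
  rw [upperCap, lowerCap, iInf_subtype', iSup_subtype', ENNReal.sub_iInf]
  exact iSup_congr fun P => measure_compl_eq_one_sub hprob P.2 hB

lemma lowerCap_compl (hne : Ps.Nonempty) {B : Set Ω} (hB : MeasurableSet B) :
    lowerCap Ps Bᶜ = 1 - upperCap Ps B := by
  have : Nonempty Ps := hne.to_subtype
  rw [lowerCap, upperCap, iInf_subtype', iSup_subtype', ENNReal.sub_iSup one_ne_top]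
  exact iInf_congr fun P => measure_compl_eq_one_sub hprob P.2 hB

variable {ι : Type*} {l : Filter ι}

lemma limsup_upperCap_le_of_le_liminf_lowerCap_compl {B : Set Ω} {Bs : ι → Set Ω}
    (hB : MeasurableSet B) (hBs : ∀ i, MeasurableSet (Bs i))
    (h : lowerCap Ps Bᶜ ≤ liminf (fun i => lowerCap Ps (Bs i)ᶜ) l) :
    limsup (fun i => upperCap Ps (Bs i)) l ≤ upperCap Ps B := by
  have hdual : ∀ C : Set Ω, MeasurableSet C → upperCap Ps C = 1 - lowerCap Ps Cᶜ := fun C hC => by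
    rw [← upperCap_compl hprob hC.compl, compl_compl]
  calc limsup (fun i => upperCap Ps (Bs i)) l
      = limsup (fun i => 1 - lowerCap Ps (Bs i)ᶜ) l := by simp only [hdual _ (hBs _)]
    _ = 1 - liminf (fun i => lowerCap Ps (Bs i)ᶜ) l := ENNReal.limsup_const_sub _ _ one_ne_top
    _ ≤ 1 - lowerCap Ps Bᶜ := tsub_le_tsub_left h 1
    _ = upperCap Ps B := (hdual B hB).symm

lemma limsup_lowerCap_le_of_le_liminf_upperCap_compl (hne : Ps.Nonempty) {B : Set Ω}
    {Bs : ι → Set Ω} (hB : MeasurableSet B) (hBs : ∀ i, MeasurableSet (Bs i))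
    (h : upperCap Ps Bᶜ ≤ liminf (fun i => upperCap Ps (Bs i)ᶜ) l) :
    limsup (fun i => lowerCap Ps (Bs i)) l ≤ lowerCap Ps B := by
  have hdual : ∀ C : Set Ω, MeasurableSet C → lowerCap Ps C = 1 - upperCap Ps Cᶜ := fun C hC => by
    rw [← lowerCap_compl hprob hne hC.compl, compl_compl]
  calc limsup (fun i => lowerCap Ps (Bs i)) l
      = limsup (fun i => 1 - upperCap Ps (Bs i)ᶜ) l := by simp only [hdual _ (hBs _)]
    _ = 1 - liminf (fun i => upperCap Ps (Bs i)ᶜ) l := ENNReal.limsup_const_sub _ _ one_ne_top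
    _ ≤ 1 - upperCap Ps Bᶜ := tsub_le_tsub_left h 1
    _ = lowerCap Ps B := (hdual B hB).symm

end Capacity

lemma tendsto_of_le_liminf_of_limsup_le_of_le_of_le {ι α : Type*} [CompleteLinearOrder α]
    [TopologicalSpace α] [OrderTopology α] {l : Filter ι} {f g h : ι → α} {a : α}
    (hgf : g ≤ f) (hfh : f ≤ h) (hg : a ≤ liminf g l) (hh : limsup h l ≤ a) :
    Tendsto f l (𝓝 a) :=
  tendsto_of_le_liminf_of_limsup_le (hg.trans (liminf_le_liminf (.of_forall hgf)))
    ((limsup_le_limsup (.of_forall hfh)).trans hh)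

theorem portmanteau_continuity_sets {Ω : Type*} [MeasurableSpace Ω]
    (Ps : Set (Measure Ω)) (hne : Ps.Nonempty)
    (hprob : ∀ P ∈ Ps, IsProbabilityMeasure P)
    (X : Ω → ℝ) (Xn : ℕ → Ω → ℝ) (hX : Measurable X) (hXn : ∀ n, Measurable (Xn n))
    (hopen : ∀ U : Set ℝ, IsOpen U →
      upperCap Ps (X ⁻¹' U) ≤
        Filter.liminf (fun n => upperCap Ps (Xn n ⁻¹' U)) atTop ∧
      lowerCap Ps (X ⁻¹' U) ≤
        Filter.liminf (fun n => lowerCap Ps (Xn n ⁻¹' U)) atTop) :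
    ∀ A : Set ℝ, MeasurableSet A → upperCap Ps (X ⁻¹' frontier A) = 0 →
      Tendsto (fun n => upperCap Ps (Xn n ⁻¹' A)) atTop (𝓝 (upperCap Ps (X ⁻¹' A))) ∧
      Tendsto (fun n => lowerCap Ps (Xn n ⁻¹' A)) atTop (𝓝 (lowerCap Ps (X ⁻¹' A))) := by
  intro A _ hfr
  have hclosure : MeasurableSet (closure A) := isClosed_closure.measurableSet
  have hint : ∀ Y : Ω → ℝ, Y ⁻¹' interior A ⊆ Y ⁻¹' A := fun _ => preimage_mono interior_subset
  have hcl : ∀ Y : Ω → ℝ, Y ⁻¹' A ⊆ Y ⁻¹' closure A := fun _ => preimage_mono subset_closure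
  obtain ⟨hVi, hvi⟩ := hopen _ isOpen_interior
  obtain ⟨hVc, hvc⟩ := hopen _ isClosed_closure.isOpen_compl
  obtain ⟨hVA, hVA'⟩ := upperCap_eq_of_between_null_sdiff (hint X) (hcl X) hfr
  obtain ⟨hvA, hvA'⟩ := lowerCap_eq_of_between_null_sdiff (hint X) (hcl X) hfr
  refine ⟨tendsto_of_le_liminf_of_limsup_le_of_le_of_le (fun _ => upperCap_mono (hint _))
    (fun _ => upperCap_mono (hcl _)) (hVA ▸ hVi) (hVA' ▸ ?_),
    tendsto_of_le_liminf_of_limsup_le_of_le_of_le (fun _ => lowerCap_mono (hint _))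
    (fun _ => lowerCap_mono (hcl _)) (hvA ▸ hvi) (hvA' ▸ ?_)⟩
  · exact limsup_upperCap_le_of_le_liminf_lowerCap_compl hprob (hX hclosure)
      (fun n => hXn n hclosure) hvc
  · exact limsup_lowerCap_le_of_le_liminf_upperCap_compl hprob hne (hX hclosure)
      (fun n => hXn n hclosure) hVc
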